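/- Suppose there exists δ > 0 such that p_i > δ for all i ≥ 1. Then the set E is compact and its complement ℂ \ E is connected. -/

import Mathlib

/-- `rr p n = r_n = p (⌊(n+1)/2⌋ + 1)`. -/
noncomputable def rr (p : ℕ → ℝ) (n : ℕ) : ℝ := p ((n+1)/2 + 1)

/-- `qF p z n = q_{F_n}(z)`. -/
noncomputable def qF (p : ℕ → ℝ) (z : ℂ) : ℕ → ℂ
  | 0 => (z - (1 - (p 1 : ℂ))) / (p 1 : ℂ)
  | 1 => (1 / (p 2 : ℂ)) * (qF p z 0) ^ 2 - (1 / (p 2 : ℂ) - 1)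
  | (n+2) => (1 / (rr p (n+2) : ℂ)) * qF p z (n+1) * qF p z n - (1 / (rr p (n+2) : ℂ) - 1)

/-- The fibered filled Julia set `E = {z : (q_{F_n}(z))ₙ is bounded}`. -/
def Eset (p : ℕ → ℝ) : Set ℂ := {z : ℂ | ∃ C : ℝ, ∀ n : ℕ, ‖qF p z n‖ ≤ C}


/-!
Each step of the recursion applies the affine map `w ↦ (w - (1 - r)) / r` (with `r ∈ (δ, 1]`)
to the product `q_{n+1} q_n`. Hence `|q_{n+2}| ≥ |q_{n+1}| |q_n|` as soon as that product is at
least `1`, and `δ |q_{n+2}| ≤ |q_{n+1}| |q_n| + 1`. By the first inequality an orbit escapes once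
two consecutive terms exceed `2`, which confines `E` to the disc of radius `2`. By the second,
an orbit that never has two consecutive terms above `2` is bounded by its first two terms and
`3 / δ`: a term above `3 / δ` is smaller than the one two steps earlier. So
`E = {z : |q_n(z)| ≤ M for all n}` for a constant `M`, an intersection of sublevel sets of
entire functions. Such a set is closed, and by the maximum modulus principle no component of its
complement is bounded, so the complement is connected.
-/

open Metric Set Bornology

section Topology

variable {X : Type*} [TopologicalSpace X]

theorem IsOpen.frontier_connectedComponentIn_subset [LocallyConnectedSpace X] {s : Set X}
    (hs : IsOpen s) (x : X) : frontier (connectedComponentIn s x) ⊆ sᶜ := by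
  intro w hw hws
  rw [hs.connectedComponentIn.frontier_eq] at hw
  obtain ⟨v, hvw, hvx⟩ :=
    mem_closure_iff.1 hw.1 _ hs.connectedComponentIn (mem_connectedComponentIn hws)
  apply hw.2
  rw [connectedComponentIn_eq hvx, ← connectedComponentIn_eq hvw]
  exact mem_connectedComponentIn hws

theorem isConnected_of_connectedComponentIn_inter_nonempty {s W : Set X} (hW : IsConnected W)
    (hWs : W ⊆ s) (h : ∀ y ∈ s, (connectedComponentIn s y ∩ W).Nonempty) : IsConnected s := by
  obtain ⟨x, hx⟩ := hW.nonempty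
  refine ⟨⟨x, hWs hx⟩, isPreconnected_of_forall x fun y hy => ?_⟩
  obtain ⟨w, hwy, hwW⟩ := h y hy
  exact ⟨connectedComponentIn s y ∪ W, union_subset (connectedComponentIn_subset _ _) hWs,
    Or.inr hx, Or.inl (mem_connectedComponentIn hy),
    isPreconnected_connectedComponentIn.union w hwy hwW hW.isPreconnected⟩

end Topology

theorem isConnected_compl_closedBall {E : Type*} [NormedAddCommGroup E] [NormedSpace ℝ E]
    (h : 1 < Module.rank ℝ E) {r : ℝ} (hr : 0 ≤ r) : IsConnected (closedBall (0 : E) r)ᶜ := by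
  have himage : (fun q : ℝ × E => q.1 • q.2) '' (Ioi r ×ˢ sphere 0 1) = (closedBall 0 r)ᶜ := by
    ext z
    simp only [mem_image, mem_prod, mem_Ioi, mem_sphere_zero_iff_norm, Prod.exists,
      mem_compl_iff, mem_closedBall_zero_iff, not_le]
    constructor
    · rintro ⟨t, v, ⟨ht, hv⟩, rfl⟩
      rwa [norm_smul, hv, mul_one, Real.norm_of_nonneg (hr.trans ht.le)]
    · intro hz
      have hz0 : ‖z‖ ≠ 0 := (hr.trans_lt hz).ne'
      exact ⟨‖z‖, ‖z‖⁻¹ • z, ⟨hz, by rw [norm_smul, norm_inv, norm_norm, inv_mul_cancel₀ hz0]⟩,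
        smul_inv_smul₀ hz0 z⟩
  rw [← himage]
  exact (isConnected_Ioi.prod (isConnected_sphere h 0 zero_le_one)).image _
    (continuous_fst.smul continuous_snd).continuousOn

theorem isCompact_and_isConnected_compl_setOf_forall_norm_le {ι : Type*} {f : ι → ℂ → ℂ}
    (hf : ∀ i, Differentiable ℂ (f i)) {M : ℝ} (hK : IsBounded {z | ∀ i, ‖f i z‖ ≤ M}) :
    IsCompact {z | ∀ i, ‖f i z‖ ≤ M} ∧ IsConnected {z | ∀ i, ‖f i z‖ ≤ M}ᶜ := by
  set K := {z | ∀ i, ‖f i z‖ ≤ M}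
  have hKc : IsClosed K := by
    simp only [K, ofPred_forall]
    exact isClosed_iInter fun i => isClosed_le (hf i).continuous.norm continuous_const
  refine ⟨isCompact_of_isClosed_isBounded hKc hK, ?_⟩
  obtain ⟨R, hR, hKR⟩ := hK.subset_closedBall_lt 0 0
  refine isConnected_of_connectedComponentIn_inter_nonempty
    (isConnected_compl_closedBall (by simp [Complex.rank_real_complex]) hR.le)
    (compl_subset_compl.2 hKR) fun y hy => ?_
  rw [inter_compl_nonempty_iff]
  intro hyR
  refine hy fun i => ?_
  have hfrontier := hKc.isOpen_compl.frontier_connectedComponentIn_subset y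
  rw [compl_compl] at hfrontier
  exact Complex.norm_le_of_forall_mem_frontier_norm_le (isBounded_closedBall.subset hyR)
    (hf i).diffContOnCl (fun w hw => hfrontier hw i) (subset_closure (mem_connectedComponentIn hy))

section ProductRecursion

variable {a : ℕ → ℝ} (hmul : ∀ n, 1 ≤ a (n + 1) * a n → a (n + 1) * a n ≤ a (n + 2))
include hmul

theorem not_bddAbove_range_of_two_le {n : ℕ} (h0 : 2 ≤ a n) (h1 : 2 ≤ a (n + 1)) :
    ¬BddAbove (range a) := by
  have key : ∀ k, 2 ≤ a (n + k) ∧ 2 ^ (k + 1) ≤ a (n + k + 1) := by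
    intro k
    induction k with
    | zero => simpa using ⟨h0, h1⟩
    | succ k ih =>
      obtain ⟨hk0, hk1⟩ := ih
      have h2k : (2 : ℝ) ≤ 2 ^ (k + 1) := le_self_pow₀ one_le_two (by omega)
      have hprod : 2 ^ (k + 1) * 2 ≤ a (n + k + 1) * a (n + k) :=
        mul_le_mul hk1 hk0 zero_le_two (by linarith)
      refine ⟨h2k.trans hk1, ?_⟩
      rw [pow_succ]
      exact hprod.trans (hmul (n + k) (by nlinarith))
  rintro ⟨C, hC⟩
  obtain ⟨k, hk⟩ := pow_unbounded_of_one_lt C one_lt_two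
  have hCk := hC (mem_range_self (n + k + 1))
  linarith [(key k).2, pow_le_pow_right₀ (one_le_two : (1 : ℝ) ≤ 2) (by omega : k ≤ k + 1)]

theorem forall_le_of_le_two_or_le_two {δ B : ℝ} (ha : ∀ n, 0 ≤ a n)
    (hle : ∀ n, δ * a (n + 2) ≤ a (n + 1) * a n + 1) (h2 : ∀ n, a n ≤ 2 ∨ a (n + 1) ≤ 2)
    (hB : 2 ≤ B) (hδB : 3 ≤ δ * B) (h0 : a 0 ≤ B) (h1 : a 1 ≤ B) (n : ℕ) : a n ≤ B := by
  suffices ∀ n, a n ≤ B ∧ a (n + 1) ≤ B from (this n).1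
  intro n
  induction n with
  | zero => exact ⟨h0, h1⟩
  | succ n ih =>
    show a (n + 1) ≤ B ∧ a (n + 2) ≤ B
    refine ⟨ih.2, ?_⟩
    by_contra! hgt
    have hn1 : a (n + 1) ≤ 2 := (h2 (n + 1)).resolve_right (by linarith)
    have hn3 : a (n + 3) ≤ 2 := (h2 (n + 2)).resolve_left (by linarith)
    have hprod : a (n + 2) * a (n + 1) ≤ 2 := by
      by_cases h : 1 ≤ a (n + 2) * a (n + 1)
      · exact (hmul (n + 1) h).trans hn3
      · linarith
    have hδ : 0 < δ := pos_of_mul_pos_left (by linarith) (by linarith : (0 : ℝ) ≤ B)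
    have h3 : 3 < δ * a (n + 2) := hδB.trans_lt (mul_lt_mul_of_pos_left hgt hδ)
    have : 3 * a (n + 2) < 2 * a n + a (n + 2) :=
      calc 3 * a (n + 2) < δ * a (n + 2) * a (n + 2) := by nlinarith
        _ ≤ (a (n + 1) * a n + 1) * a (n + 2) :=
          mul_le_mul_of_nonneg_right (hle n) (ha _)
        _ = a (n + 2) * a (n + 1) * a n + a (n + 2) := by ring
        _ ≤ 2 * a n + a (n + 2) := by nlinarith [ha n]
    linarith [ih.1]

end ProductRecursion

noncomputable def qStep (r : ℝ) (w : ℂ) : ℂ := (w - (1 - r)) / r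

section qStep

variable {r : ℝ} (w : ℂ)

theorem norm_one_sub_ofReal (hr1 : r ≤ 1) : ‖(1 - r : ℂ)‖ = 1 - r := by
  rw [← Complex.ofReal_one, ← Complex.ofReal_sub, Complex.norm_real,
    Real.norm_of_nonneg (sub_nonneg.2 hr1)]

theorem norm_qStep (hr : 0 < r) : ‖qStep r w‖ = ‖w - (1 - r)‖ / r := by
  rw [qStep, norm_div, Complex.norm_real, Real.norm_of_nonneg hr.le]

theorem norm_le_norm_qStep (hr : 0 < r) (hr1 : r ≤ 1) (hw : 1 ≤ ‖w‖) : ‖w‖ ≤ ‖qStep r w‖ := by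
  rw [norm_qStep w hr, le_div_iff₀ hr]
  have := norm_sub_norm_le w (1 - r)
  rw [norm_one_sub_ofReal hr1] at this
  nlinarith

theorem mul_norm_qStep_le (hr : 0 < r) (hr1 : r ≤ 1) : r * ‖qStep r w‖ ≤ ‖w‖ + 1 := by
  rw [norm_qStep w hr, mul_div_cancel₀ _ hr.ne']
  linarith [norm_sub_le w (1 - r), norm_one_sub_ofReal hr1]

end qStep

section qF

variable (p : ℕ → ℝ) (z : ℂ)

theorem qF_zero : qF p z 0 = qStep (p 1) z := rfl

theorem qF_one (h : p 2 ≠ 0) : qF p z 1 = qStep (p 2) (qF p z 0 ^ 2) := by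
  have h' : (p 2 : ℂ) ≠ 0 := by exact_mod_cast h
  simp only [qF, qStep]
  field_simp

theorem qF_add_two (n : ℕ) (h : rr p (n + 2) ≠ 0) :
    qF p z (n + 2) = qStep (rr p (n + 2)) (qF p z (n + 1) * qF p z n) := by
  have h' : (rr p (n + 2) : ℂ) ≠ 0 := by exact_mod_cast h
  rw [qF, qStep]
  field_simp

theorem differentiable_qF (n : ℕ) : Differentiable ℂ fun z => qF p z n := by
  induction n using qF.induct with
  | case1 => exact (differentiable_id.sub_const _).div_const _
  | case2 h0 => exact ((h0.pow 2).const_mul _).sub_const _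
  | case3 n h1 h0 => exact ((h1.const_mul _).mul h0).sub_const _

end qF

section Eset

variable {p : ℕ → ℝ} (hp : ∀ i, 1 ≤ i → 0 < p i ∧ p i ≤ 1)
include hp

theorem mul_norm_qF_le_norm_qF_add_two (z : ℂ) (n : ℕ)
    (h : 1 ≤ ‖qF p z (n + 1)‖ * ‖qF p z n‖) :
    ‖qF p z (n + 1)‖ * ‖qF p z n‖ ≤ ‖qF p z (n + 2)‖ := by
  obtain ⟨hr, hr1⟩ : 0 < rr p (n + 2) ∧ rr p (n + 2) ≤ 1 := hp _ (by omega)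
  rw [qF_add_two p z n hr.ne', ← norm_mul]
  exact norm_le_norm_qStep _ hr hr1 (by rwa [norm_mul])

theorem mul_norm_qF_add_two_le {δ : ℝ} (hpδ : ∀ i, 1 ≤ i → δ < p i) (z : ℂ) (n : ℕ) :
    δ * ‖qF p z (n + 2)‖ ≤ ‖qF p z (n + 1)‖ * ‖qF p z n‖ + 1 := by
  obtain ⟨hr, hr1⟩ : 0 < rr p (n + 2) ∧ rr p (n + 2) ≤ 1 := hp _ (by omega)
  have hδr : δ < rr p (n + 2) := hpδ _ (by omega)
  rw [qF_add_two p z n hr.ne', ← norm_mul]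
  exact (mul_le_mul_of_nonneg_right hδr.le (norm_nonneg _)).trans (mul_norm_qStep_le _ hr hr1)

theorem norm_qF_le_two_or_of_mem_Eset {z : ℂ} (hz : z ∈ Eset p) (n : ℕ) :
    ‖qF p z n‖ ≤ 2 ∨ ‖qF p z (n + 1)‖ ≤ 2 := by
  by_contra! h
  obtain ⟨C, hC⟩ := hz
  exact not_bddAbove_range_of_two_le (a := fun n => ‖qF p z n‖)
    (mul_norm_qF_le_norm_qF_add_two hp z) h.1.le h.2.le ⟨C, forall_mem_range.2 hC⟩

theorem Eset_subset_closedBall : Eset p ⊆ closedBall 0 2 := by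
  intro z hz
  rw [mem_closedBall_zero_iff]
  by_contra! hz2
  have h0 : ‖z‖ ≤ ‖qF p z 0‖ :=
    norm_le_norm_qStep z (hp 1 le_rfl).1 (hp 1 le_rfl).2 (by linarith)
  have h1 : ‖qF p z 0‖ ≤ ‖qF p z 1‖ := by
    obtain ⟨hr, hr1⟩ := hp 2 (by norm_num)
    rw [qF_one p z hr.ne']
    refine le_trans ?_ (norm_le_norm_qStep _ hr hr1 ?_) <;> rw [norm_pow] <;> nlinarith
  rcases norm_qF_le_two_or_of_mem_Eset hp hz 0 with h | h <;> linarith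

theorem exists_Eset_eq_setOf_forall_norm_le {δ : ℝ} (hδ : 0 < δ)
    (hpδ : ∀ i, 1 ≤ i → δ < p i) : ∃ M, Eset p = {z | ∀ n, ‖qF p z n‖ ≤ M} := by
  obtain ⟨C₀, hC₀⟩ := (isCompact_closedBall (0 : ℂ) 2).exists_bound_of_continuousOn
    (differentiable_qF p 0).continuous.continuousOn
  obtain ⟨C₁, hC₁⟩ := (isCompact_closedBall (0 : ℂ) 2).exists_bound_of_continuousOn
    (differentiable_qF p 1).continuous.continuousOn
  set B := max (max C₀ C₁) (max 2 (3 / δ))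
  refine ⟨B, subset_antisymm (fun z hz => ?_) fun z hz => ⟨B, hz⟩⟩
  have hz2 := Eset_subset_closedBall hp hz
  have hδB : 3 ≤ δ * B :=
    calc 3 = δ * (3 / δ) := by field_simp
      _ ≤ δ * B := mul_le_mul_of_nonneg_left (le_max_of_le_right (le_max_right _ _)) hδ.le
  exact forall_le_of_le_two_or_le_two (a := fun n => ‖qF p z n‖)
    (mul_norm_qF_le_norm_qF_add_two hp z) (fun n => norm_nonneg _)
    (mul_norm_qF_add_two_le hp hpδ z) (norm_qF_le_two_or_of_mem_Eset hp hz)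
    (le_max_of_le_right (le_max_left _ _)) hδB
    (le_max_of_le_left (le_max_of_le_left (hC₀ z hz2)))
    (le_max_of_le_left (le_max_of_le_right (hC₁ z hz2)))

end Eset

/-- Suppose `p i > δ > 0` for all `i ≥ 1`.  Then `E` is compact and
`ℂ \ E` is connected. -/
theorem stmt15 (p : ℕ → ℝ) (hp : ∀ i, 1 ≤ i → 0 < p i ∧ p i ≤ 1)
    (δ : ℝ) (hδ : 0 < δ) (hpδ : ∀ i, 1 ≤ i → δ < p i) :
    IsCompact (Eset p) ∧ IsConnected (Eset p)ᶜ := by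
  obtain ⟨M, hM⟩ := exists_Eset_eq_setOf_forall_norm_le hp hδ hpδ
  have hbdd : IsBounded (Eset p) := isBounded_closedBall.subset (Eset_subset_closedBall hp)
  rw [hM] at hbdd ⊢
  exact isCompact_and_isConnected_compl_setOf_forall_norm_le
    (f := fun n z => qF p z n) (differentiable_qF p) hbdd
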